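/- If N = (p_1 p_2 ⋯ p_t)^{2a} = m^2 is a quasiperfect number (where p_1, ..., p_t are distinct primes and a is a positive integer), then N is not divisible by 3 and σ(N) = 2m^2 + 1 is divisible by 3. -/

import Mathlib

open Finset ArithmeticFunction Function
open scoped ArithmeticFunction.sigma

/-- A positive integer `N` is quasiperfect if `σ(N) = 2N + 1`. -/
def Quasiperfect (N : ℕ) : Prop :=
  0 < N ∧ ArithmeticFunction.sigma 1 N = 2 * N + 1

/-!
Write `N = m²` with `m = ∏ pᵢ^a`. Every divisor `d` of `σ(N) = 2m² + 1` has `-2 ≡ (2m)²` a square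
mod `d`, so `d ≡ 1, 3 (mod 8)`; this applies to each factor `σ(pᵢ^{2a})` of `σ(N)`.
Since `σ(2^{2a}) ≡ 7 (mod 8)`, all `pᵢ` are odd, and for odd `p` one has
`σ(p^{2a}) ≡ a + 1 + a p (mod 8)`. If `a` were even every factor would be `≡ 1 (mod 4)`,
while `2m² + 1 ≡ 3 (mod 4)`; so `a` is odd, and then `σ(3^{2a}) ≡ 4a + 1 ≡ 5 (mod 8)` rules out
`pᵢ = 3`. Finally `3 ∤ m` gives `2m² + 1 ≡ 0 (mod 3)`.
-/

theorem mod_eight_eq_one_or_three_of_dvd_two_mul_sq_add_one {d m : ℕ} (hd : d ∣ 2 * m ^ 2 + 1) :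
    d % 8 = 1 ∨ d % 8 = 3 := by
  have hodd : Odd d := Odd.of_dvd_nat (by simp [parity_simps]) hd
  have hsq : IsSquare ((-2 : ℤ) : ZMod d) := by
    have h0 : ((2 * m ^ 2 + 1 : ℕ) : ZMod d) = 0 := (ZMod.natCast_eq_zero_iff _ _).mpr hd
    refine ⟨((2 * m : ℕ) : ZMod d), ?_⟩
    push_cast at h0 ⊢
    linear_combination (-2 : ZMod d) * h0
  have hχ : ZMod.χ₈' d ≠ -1 := fun h ↦
    ZMod.nonsquare_of_jacobiSym_eq_neg_one (by rwa [jacobiSym.at_neg_two hodd]) hsq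
  rw [ZMod.χ₈'_nat_eq_if_mod_eight] at hχ
  have := Nat.odd_iff.mp hodd
  split_ifs at hχ <;> omega

theorem three_dvd_two_mul_sq_add_one {m : ℕ} (hm : ¬ 3 ∣ m) : 3 ∣ 2 * m ^ 2 + 1 := by
  have : m % 3 = 1 ∨ m % 3 = 2 := by omega
  rcases this with h | h <;>
    simp [Nat.dvd_iff_mod_eq_zero, Nat.add_mod, Nat.mul_mod, Nat.pow_mod, h]

theorem geom_sum_two_mul_add_one_of_sq_eq_one {R : Type*} [CommSemiring R] {q : R}
    (hq : q ^ 2 = 1) (a : ℕ) : ∑ i ∈ range (2 * a + 1), q ^ i = a + 1 + a * q := by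
  induction a with
  | zero => simp
  | succ a ih =>
    have hodd : q ^ (2 * a + 1) = q := by rw [pow_succ, pow_mul, hq, one_pow, one_mul]
    have heven : q ^ (2 * a + 1 + 1) = 1 := by rw [pow_succ, hodd, ← sq, hq]
    rw [show 2 * (a + 1) + 1 = 2 * a + 1 + 1 + 1 by ring, sum_range_succ, sum_range_succ, ih,
      hodd, heven]
    push_cast
    ring

theorem sigma_two_pow_mod_eight {k : ℕ} (hk : 2 ≤ k) : σ 1 (2 ^ k) % 8 = 7 := by
  rw [sigma_one_apply_prime_pow Nat.prime_two, Nat.geomSum_eq le_rfl, Nat.div_one]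
  exact mersenne_mod_eight (by omega)

theorem sigma_prime_pow_two_mul_mod_eight {p : ℕ} (hp : p.Prime) (hp2 : p ≠ 2) (a : ℕ) :
    σ 1 (p ^ (2 * a)) % 8 = (a + 1 + a * p) % 8 := by
  have hsq : (p : ZMod 8) ^ 2 = 1 := by
    have h8 := Nat.eight_dvd_sq_sub_one_of_odd (hp.odd_of_ne_two hp2)
    have : 1 ≤ p ^ 2 := Nat.one_le_pow _ _ hp.pos
    exact_mod_cast (ZMod.natCast_eq_natCast_iff' (p ^ 2) 1 8).mpr (by omega)
  rw [← ZMod.natCast_eq_natCast_iff', sigma_one_apply_prime_pow hp]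
  push_cast
  exact geom_sum_two_mul_add_one_of_sq_eq_one hsq a

theorem sigma_prime_pow_two_mul_mod_four_of_even {p a : ℕ} (hp : p.Prime) (hp2 : p ≠ 2)
    (ha : Even a) : σ 1 (p ^ (2 * a)) % 4 = 1 := by
  have h8 := sigma_prime_pow_two_mul_mod_eight hp hp2 a
  obtain ⟨c, rfl⟩ := ha
  obtain ⟨k, rfl⟩ := hp.odd_of_ne_two hp2
  have : (c + c) * (2 * k + 1) = 4 * (c * k) + 2 * c := by ring
  omega

theorem Nat.Prime.exists_eq_of_dvd_prod {ι : Type*} {s : Finset ι} {p : ι → ℕ} {q : ℕ}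
    (hq : q.Prime) (hp : ∀ i ∈ s, (p i).Prime) (h : q ∣ ∏ i ∈ s, p i) : ∃ i ∈ s, p i = q := by
  obtain ⟨i, hi, hqi⟩ := (Prime.dvd_finsetProd_iff hq.prime _).mp h
  exact ⟨i, hi, ((Nat.prime_dvd_prime_iff_eq hq (hp i hi)).mp hqi).symm⟩

theorem ArithmeticFunction.IsMultiplicative.map_prod_pow_of_injective {R ι : Type*}
    [CommMonoidWithZero R] [Fintype ι] {f : ArithmeticFunction R} (hf : f.IsMultiplicative)
    {p : ι → ℕ} (hp : ∀ i, (p i).Prime) (hinj : Injective p) (k : ℕ) :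
    f ((∏ i, p i) ^ k) = ∏ i, f (p i ^ k) := by
  rw [← prod_pow]
  exact hf.map_prod _ _ fun i _ j _ hij ↦
    Nat.Coprime.pow _ _ ((Nat.coprime_primes (hp i) (hp j)).mpr (hinj.ne hij))

section

variable {ι : Type*} [Fintype ι] {p : ι → ℕ} {a : ℕ}

theorem sigma_prime_pow_mod_eight_of_quasiperfect (hp : ∀ i, (p i).Prime) (hinj : Injective p)
    (hq : Quasiperfect ((∏ i, p i) ^ (2 * a))) (i : ι) :
    σ 1 (p i ^ (2 * a)) % 8 = 1 ∨ σ 1 (p i ^ (2 * a)) % 8 = 3 := by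
  apply mod_eight_eq_one_or_three_of_dvd_two_mul_sq_add_one (m := (∏ i, p i) ^ a)
  rw [← pow_mul, mul_comm a, ← hq.2, isMultiplicative_sigma.map_prod_pow_of_injective hp hinj]
  exact dvd_prod_of_mem _ (mem_univ i)

theorem prime_ne_two_of_quasiperfect (hp : ∀ i, (p i).Prime) (hinj : Injective p) (ha : 0 < a)
    (hq : Quasiperfect ((∏ i, p i) ^ (2 * a))) (i : ι) : p i ≠ 2 := by
  intro h2
  have h7 := sigma_two_pow_mod_eight (k := 2 * a) (by omega)
  have := sigma_prime_pow_mod_eight_of_quasiperfect hp hinj hq i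
  rw [h2] at this
  omega

theorem odd_of_quasiperfect (hp : ∀ i, (p i).Prime) (hinj : Injective p) (ha : 0 < a)
    (hq : Quasiperfect ((∏ i, p i) ^ (2 * a))) : Odd a := by
  by_contra h
  have ha_even : Even a := Nat.not_odd_iff_even.mp h
  have hN_odd : ¬ 2 ∣ (∏ i, p i) ^ (2 * a) := fun h2 ↦ by
    obtain ⟨i, -, hi⟩ := Nat.prime_two.exists_eq_of_dvd_prod (fun i _ ↦ hp i)
      (Nat.prime_two.dvd_of_dvd_pow h2)
    exact prime_ne_two_of_quasiperfect hp hinj ha hq i hi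
  have hσ : σ 1 ((∏ i, p i) ^ (2 * a)) % 4 = 1 := by
    rw [isMultiplicative_sigma.map_prod_pow_of_injective hp hinj, prod_nat_mod,
      prod_congr rfl fun i _ ↦ sigma_prime_pow_two_mul_mod_four_of_even (hp i)
        (prime_ne_two_of_quasiperfect hp hinj ha hq i) ha_even,
      prod_const_one, Nat.one_mod]
  rw [hq.2] at hσ
  omega

theorem prime_ne_three_of_quasiperfect (hp : ∀ i, (p i).Prime) (hinj : Injective p) (ha : 0 < a)
    (hq : Quasiperfect ((∏ i, p i) ^ (2 * a))) (i : ι) : p i ≠ 3 := by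
  intro h3
  have h8 := sigma_prime_pow_mod_eight_of_quasiperfect hp hinj hq i
  rw [h3, sigma_prime_pow_two_mul_mod_eight Nat.prime_three (by decide)] at h8
  have := Nat.odd_iff.mp (odd_of_quasiperfect hp hinj ha hq)
  omega

end

/-- If `N = (p₁ p₂ ⋯ p_t)^{2a} = m²` is quasiperfect, then `N` is not divisible by `3`
and `σ(N) = 2 m² + 1` is divisible by `3`. -/
theorem stmt_7 (t : ℕ) (p : Fin t → ℕ) (a N m : ℕ)
    (hp : ∀ i, (p i).Prime) (hinj : Function.Injective p)
    (ha : 0 < a)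
    (hN : N = (∏ i, p i) ^ (2 * a)) (hm : N = m ^ 2)
    (hq : Quasiperfect N) :
    ¬ (3 ∣ N) ∧ ArithmeticFunction.sigma 1 N = 2 * m ^ 2 + 1 ∧
      3 ∣ 2 * m ^ 2 + 1 := by
  subst hN
  have h3N : ¬ 3 ∣ (∏ i, p i) ^ (2 * a) := fun h ↦ by
    obtain ⟨i, -, hi⟩ := Nat.prime_three.exists_eq_of_dvd_prod (fun i _ ↦ hp i)
      (Nat.prime_three.dvd_of_dvd_pow h)
    exact prime_ne_three_of_quasiperfect hp hinj ha hq i hi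
  refine ⟨h3N, by rw [hq.2, hm], three_dvd_two_mul_sq_add_one fun h ↦ h3N ?_⟩
  exact hm ▸ dvd_pow h two_ne_zero
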